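/- Consider the two-stage min-max fleet purchasing problem without compatibility constraints, with m ≥ 1 scenarios and τ ≥ 1 agent types: per-type first-stage costs c_t > 0, scenario inflation factors σ_k > 1, and per-scenario fleet requirements n_{k,t} ∈ ℕ; a solution consists of first-stage purchases y : types → ℕ and second-stage purchases s : scenarios × types → ℕ satisfying y_t + s_{k,t} ≥ n_{k,t} for every scenario k and type t, and its objective value is max over scenarios k of Σ_t c_t·(y_t + σ_k·s_{k,t}). If there is a dominant scenario k* with n_{k,t} ≤ n_{k*,t} for every scenario k and type t, then the optimal (minimum) objective value equals Σ_t c_t·n_{k*,t}; that is, Σ_t c_t·n_{k*,t} is the least element of the set of achievable objective values. -/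
import Mathlib


/-- Remark 1 of the paper: in the two-stage min-max fleet purchasing problem
without compatibility constraints, if a dominant scenario `kstar` exists, the
optimal min-max objective value equals the first-stage cost of the fleet of the
dominant scenario. -/
theorem dominant_scenario_optimal
    (m τ : ℕ) (hm : 1 ≤ m) (hτ : 1 ≤ τ)
    (c : Fin τ → ℝ) (hc : ∀ t, 0 < c t)
    (σ : Fin m → ℝ) (hσ : ∀ k, 1 < σ k)
    (n : Fin m → Fin τ → ℕ)
    (kstar : Fin m) (hdom : ∀ k t, n k t ≤ n kstar t) :
    IsLeast
      { z : ℝ | ∃ (y : Fin τ → ℕ) (s : Fin m → Fin τ → ℕ),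
          (∀ k t, n k t ≤ y t + s k t) ∧
          z = Finset.univ.sup' (Finset.univ_nonempty_iff.mpr ⟨⟨0, hm⟩⟩)
                (fun k => ∑ t, c t * ((y t : ℝ) + σ k * (s k t : ℝ))) }
      (∑ t, c t * (n kstar t : ℝ)) := by
  constructor
  · refine ⟨n kstar, fun _ _ => 0, fun k t => by simpa using hdom k t, ?_⟩
    have : ∀ k : Fin m,
        (∑ t, c t * ((n kstar t : ℝ) + σ k * ((0 : ℕ) : ℝ)))
          = ∑ t, c t * (n kstar t : ℝ) := by
      intro k; simp
    rw [Finset.sup'_congr _ rfl fun k _ => this k]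
    simp
  · rintro z ⟨y, s, hfeas, rfl⟩
    have hle : (∑ t, c t * (n kstar t : ℝ))
        ≤ ∑ t, c t * ((y t : ℝ) + σ kstar * (s kstar t : ℝ)) := by
      apply Finset.sum_le_sum
      intro t _
      apply mul_le_mul_of_nonneg_left _ (hc t).le
      have h1 : ((n kstar t : ℝ)) ≤ (y t : ℝ) + (s kstar t : ℝ) := by
        exact_mod_cast hfeas kstar t
      have h2 : (s kstar t : ℝ) ≤ σ kstar * (s kstar t : ℝ) := by
        nlinarith [(hσ kstar), (Nat.cast_nonneg (s kstar t) : (0:ℝ) ≤ s kstar t)]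
      linarith
    exact hle.trans (Finset.le_sup' (fun k => ∑ t, c t * ((y t : ℝ) + σ k * (s k t : ℝ))) (Finset.mem_univ kstar))
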